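/- arXiv:1902.04121 — 6 statements merged into one kernel-verified Lean document; each statement's English description precedes it below -/
import Mathlib

section
/- Let c > 4 be a natural number and suppose 3 divides 2^⌈c/2⌉ + 1. Then S = 2^⌈c/2⌉ - 1 is odd, not divisible by 3, and the smallest k > 0 with 2^k ≡ ±1 (mod S) equals ⌈c/2⌉; consequently 2⌈c/2⌉ ≥ c. -/
theorem stmt_2 (c : ℕ) (hc : 4 < c) (h3 : 3 ∣ 2 ^ ((c + 1) / 2) + 1) :
    Odd (2 ^ ((c + 1) / 2) - 1) ∧
    ¬ (3 ∣ (2 ^ ((c + 1) / 2) - 1)) ∧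
    IsLeast {k : ℕ | 0 < k ∧
        (2 ^ k ≡ 1 [MOD 2 ^ ((c + 1) / 2) - 1] ∨
         2 ^ k ≡ (2 ^ ((c + 1) / 2) - 1) - 1 [MOD 2 ^ ((c + 1) / 2) - 1])}
      ((c + 1) / 2) ∧
    c ≤ 2 * ((c + 1) / 2) := by
  set m := (c + 1) / 2 with hmdef
  have hm : 3 ≤ m := by omega
  have h8 : 8 ≤ 2 ^ m := by
    calc (8:ℕ) = 2 ^ 3 := rfl
    _ ≤ 2 ^ m := Nat.pow_le_pow_right (by norm_num) hm
  have h2 : 2 ∣ 2 ^ m := dvd_pow_self 2 (by omega)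
  have h4 : 4 ∣ 2 ^ m := by
    have : (4:ℕ) = 2 ^ 2 := rfl
    rw [this]
    exact pow_dvd_pow 2 (by omega)
  refine ⟨?_, ?_, ⟨⟨by omega, ?_⟩, ?_⟩, by omega⟩
  · rw [Nat.odd_iff]; omega
  · omega
  · left
    have := (Nat.modEq_iff_dvd' (show 1 ≤ 2 ^ m by omega)).mpr
      (dvd_refl (2 ^ m - 1))
    exact this.symm
  · rintro k ⟨hk0, hk⟩
    by_contra hlt
    push_neg at hlt
    have hkm : 2 ^ k ≤ 2 ^ (m - 1) := Nat.pow_le_pow_right (by norm_num) (by omega)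
    have hhalf : 2 * 2 ^ (m - 1) = 2 ^ m := by
      rw [← pow_succ']
      congr 1
      omega
    have hksmall : 2 ^ k < 2 ^ m - 1 := by omega
    have hkmod : 2 ^ k % (2 ^ m - 1) = 2 ^ k := Nat.mod_eq_of_lt (by omega)
    rcases hk with h | h
    · have : 2 ^ k = 1 := by
        have := h
        unfold Nat.ModEq at this
        rw [hkmod, Nat.mod_eq_of_lt (by omega)] at this
        exact this
      have : 2 ≤ 2 ^ k := Nat.one_lt_two_pow (by omega)
      omega
    · have heq : 2 ^ k = 2 ^ m - 2 := by
        have := h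
        unfold Nat.ModEq at this
        rw [hkmod, Nat.mod_eq_of_lt (by omega)] at this
        omega
      rcases Nat.lt_or_ge k 2 with hk2 | hk2
      · interval_cases k <;> omega
      · have h4k : 4 ∣ 2 ^ k := by
          have : (4:ℕ) = 2 ^ 2 := rfl
          rw [this]
          exact pow_dvd_pow 2 hk2
        omega
end

section
/- Let S ≥ 5 be an odd integer not divisible by 3. Define for each natural number l the graph H_{2l} on (Z/S)×(Z/S) where (x,y) is adjacent to (x ± 2^l, y) and (x, y ± 2^l), and the graph H_{2l+1} where (x,y) is adjacent to (x ± 2^l, y ± 2^l) (all mod S). Then for every t, the graph H_t contains no triangle. -/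
/-- The graph `H_{2l}` on `(ZMod S) × (ZMod S)`: `(x,y)` is adjacent to
`(x ± 2^l, y)` and `(x, y ± 2^l)` (mod `S`). -/
def Heven (S l : ℕ) : SimpleGraph (ZMod S × ZMod S) :=
  SimpleGraph.fromRel (fun u v => v = (u.1 + 2 ^ l, u.2) ∨ v = (u.1, u.2 + 2 ^ l))

/-- The graph `H_{2l+1}` on `(ZMod S) × (ZMod S)`: `(x,y)` is adjacent to
`(x ± 2^l, y ± 2^l)` (mod `S`). -/
def Hodd (S l : ℕ) : SimpleGraph (ZMod S × ZMod S) :=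
  SimpleGraph.fromRel (fun u v =>
    v = (u.1 + 2 ^ l, u.2 + 2 ^ l) ∨ v = (u.1 + 2 ^ l, u.2 - 2 ^ l))

/-- The graph `H_t`. -/
def Hgraph (S t : ℕ) : SimpleGraph (ZMod S × ZMod S) :=
  if t % 2 = 0 then Heven S (t / 2) else Hodd S (t / 2)

lemma key1 (S : ℕ) (hS : 5 ≤ S) (hodd : Odd S) (l : ℕ) : (2 ^ l : ZMod S) ≠ 0 := by
  intro h
  have hc : Nat.Coprime S (2 ^ l) := hodd.coprime_two_right.pow_right l
  have : ((2 ^ l : ℕ) : ZMod S) = 0 := by push_cast; exact h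
  have hd : S ∣ 2 ^ l := (ZMod.natCast_eq_zero_iff _ _).mp this
  have := hc.eq_one_of_dvd hd
  omega

lemma key3 (S : ℕ) (hS : 5 ≤ S) (hodd : Odd S) (h3 : ¬ (3 ∣ S)) (l : ℕ) :
    (3 * 2 ^ l : ZMod S) ≠ 0 := by
  intro h
  have hc : Nat.Coprime S (2 ^ l) := hodd.coprime_two_right.pow_right l
  have : ((3 * 2 ^ l : ℕ) : ZMod S) = 0 := by push_cast; exact h
  have hd : S ∣ 3 * 2 ^ l := (ZMod.natCast_eq_zero_iff _ _).mp this
  have hd3 : S ∣ 3 := hc.dvd_of_dvd_mul_right hd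
  have := Nat.le_of_dvd (by norm_num) hd3
  omega

lemma even_diff {S l : ℕ} {u v : ZMod S × ZMod S} (h : (Heven S l).Adj u v) :
    (v.1 + v.2) - (u.1 + u.2) = 2 ^ l ∨ (v.1 + v.2) - (u.1 + u.2) = -(2 ^ l) := by
  obtain ⟨-, h | h⟩ := h <;> rcases h with h | h <;>
    rw [Prod.ext_iff] at h <;> obtain ⟨h1, h2⟩ := h <;>
    [left; left; right; right] <;> rw [h1, h2] <;> ring

lemma odd_diff {S l : ℕ} {u v : ZMod S × ZMod S} (h : (Hodd S l).Adj u v) :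
    v.1 - u.1 = 2 ^ l ∨ v.1 - u.1 = -(2 ^ l) := by
  obtain ⟨-, h | h⟩ := h <;> rcases h with h | h <;>
    rw [Prod.ext_iff] at h <;> obtain ⟨h1, -⟩ := h <;>
    [left; left; right; right] <;> rw [h1] <;> ring

lemma no_tri {S l : ℕ} (hS : 5 ≤ S) (hodd : Odd S) (h3 : ¬ (3 ∣ S))
    {G : SimpleGraph (ZMod S × ZMod S)} (φ : ZMod S × ZMod S → ZMod S)
    (hφ : ∀ u v, G.Adj u v → φ v - φ u = 2 ^ l ∨ φ v - φ u = -(2 ^ l)) :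
    G.CliqueFree 3 := by
  intro s hs
  obtain ⟨a, b, c, hab, hac, hbc, rfl⟩ := Finset.card_eq_three.mp hs.card_eq
  have h1 := hφ a b (hs.isClique (by simp) (by simp) hab)
  have h2 := hφ b c (hs.isClique (by simp) (by simp) hbc)
  have h3' := hφ c a ((hs.isClique (by simp) (by simp) hac).symm)
  have hsum : (φ b - φ a) + (φ c - φ b) + (φ a - φ c) = 0 := by ring
  rcases h1 with h1 | h1 <;> rcases h2 with h2 | h2 <;> rcases h3' with h3' | h3' <;>
    rw [h1, h2, h3'] at hsum <;>
    first
      | exact key1 S hS hodd l (by linear_combination hsum)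
      | exact key1 S hS hodd l (by linear_combination -hsum)
      | exact key3 S hS hodd h3 l (by linear_combination hsum)
      | exact key3 S hS hodd h3 l (by linear_combination -hsum)

theorem stmt_5 (S : ℕ) (hS : 5 ≤ S) (hodd : Odd S) (h3 : ¬ (3 ∣ S)) (t : ℕ) :
    (Hgraph S t).CliqueFree 3 := by
  unfold Hgraph
  split
  · exact no_tri hS hodd h3 (fun u => u.1 + u.2) (fun u v h => even_diff h)
  · exact no_tri hS hodd h3 (fun u => u.1) (fun u v h => odd_diff h)
end

section
/- Let S ≥ 3 be odd, and define H_t as above (H_{2l}: neighbors (x ± 2^l, y), (x, y ± 2^l); H_{2l+1}: neighbors (x ± 2^l, y ± 2^l), all mod S). If 2^t ≡ 1 (mod S) or 2^t ≡ -1 (mod S), then H_{2t} = H_0. If 2^t is congruent to neither 1 nor -1 mod S, then H_{2t} ≠ H_0. -/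
section AxisStepGraph

variable {G : Type*} [AddCommGroup G]

def axisStepGraph (a : G) : SimpleGraph (G × G) :=
  SimpleGraph.fromRel fun u v => v = (u.1 + a, u.2) ∨ v = (u.1, u.2 + a)

theorem axisStepGraph_adj {a : G} {u v : G × G} :
    (axisStepGraph a).Adj u v ↔
      u ≠ v ∧ v - u ∈ ({(a, 0), (0, a), (-a, 0), (0, -a)} : Set (G × G)) := by
  have horiz (x : G × G) : (x.1 + a, x.2) = x + (a, 0) := by simp [Prod.ext_iff]
  have vert (x : G × G) : (x.1, x.2 + a) = x + (0, a) := by simp [Prod.ext_iff]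
  have forward (w : G × G) : v = u + w ↔ v - u = w := sub_eq_iff_eq_add'.symm
  have backward (w : G × G) : u = v + w ↔ v - u = -w := by
    rw [← neg_sub, neg_inj, sub_eq_iff_eq_add']
  simp only [axisStepGraph, SimpleGraph.fromRel_adj, horiz, vert, forward, backward,
    Prod.neg_mk, neg_zero, Set.mem_insert_iff, Set.mem_singleton_iff, or_assoc]

theorem axisStepGraph_neg (a : G) : axisStepGraph (-a) = axisStepGraph a := by
  ext u v
  rw [axisStepGraph_adj, axisStepGraph_adj, neg_neg, Set.insert_comm (0, -a),
    Set.insert_comm (-a, 0), Set.insert_comm (0, a), Set.pair_comm]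

theorem axisStepGraph_adj_zero {a c : G} :
    (axisStepGraph a).Adj 0 (c, 0) ↔ c ≠ 0 ∧ (c = a ∨ c = -a) := by
  simp +contextual [axisStepGraph_adj, Prod.ext_iff, eq_comm (a := (0 : G))]

theorem axisStepGraph_eq_iff {a b : G} :
    axisStepGraph a = axisStepGraph b ↔ a = b ∨ a = -b := by
  constructor
  · intro h
    rcases eq_or_ne a 0 with rfl | ha
    · rcases eq_or_ne b 0 with rfl | hb
      · exact .inl rfl
      have hadj := axisStepGraph_adj_zero.2 ⟨hb, .inl rfl⟩
      rw [← h, axisStepGraph_adj_zero, neg_zero, or_self] at hadj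
      exact absurd hadj.2 hb
    · exact (axisStepGraph_adj_zero.1 (h ▸ axisStepGraph_adj_zero.2 ⟨ha, .inl rfl⟩)).2
  · rintro (rfl | rfl)
    · rfl
    · exact axisStepGraph_neg b

end AxisStepGraph

theorem Heven_eq_axisStepGraph (S l : ℕ) : Heven S l = axisStepGraph (2 ^ l : ZMod S) := rfl

theorem ZMod.natCast_eq_neg_one_iff_modEq_sub_one {n : ℕ} (hn : n ≠ 0) (a : ℕ) :
    (a : ZMod n) = -1 ↔ a ≡ n - 1 [MOD n] := by
  rw [← ZMod.natCast_eq_natCast_iff, Nat.cast_sub (Nat.one_le_iff_ne_zero.2 hn),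
    ZMod.natCast_self, Nat.cast_one, zero_sub]

theorem stmt_7_general (S : ℕ) (hS : 3 ≤ S) (t : ℕ) :
    ((2 ^ t ≡ 1 [MOD S] ∨ 2 ^ t ≡ S - 1 [MOD S]) → Heven S t = Heven S 0) ∧
    (¬ (2 ^ t ≡ 1 [MOD S]) → ¬ (2 ^ t ≡ S - 1 [MOD S]) → Heven S t ≠ Heven S 0) := by
  have key : Heven S t = Heven S 0 ↔ 2 ^ t ≡ 1 [MOD S] ∨ 2 ^ t ≡ S - 1 [MOD S] := by
    rw [Heven_eq_axisStepGraph, Heven_eq_axisStepGraph, axisStepGraph_eq_iff, pow_zero,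
      ← ZMod.natCast_eq_neg_one_iff_modEq_sub_one (by omega), ← ZMod.natCast_eq_natCast_iff,
      Nat.cast_pow, Nat.cast_ofNat, Nat.cast_one]
  exact ⟨key.2, fun h1 h2 h => (key.1 h).elim h1 h2⟩

theorem stmt_7 (S : ℕ) (hS : 3 ≤ S) (hodd : Odd S) (t : ℕ) :
    ((2 ^ t ≡ 1 [MOD S] ∨ 2 ^ t ≡ S - 1 [MOD S]) → Heven S t = Heven S 0) ∧
    (¬ (2 ^ t ≡ 1 [MOD S]) → ¬ (2 ^ t ≡ S - 1 [MOD S]) → Heven S t ≠ Heven S 0) :=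
  stmt_7_general S hS t
end

section
/- In the degree-energy process with a single threshold β (edge (u,v) present at time t+1 iff f(deg u, deg v) ≥ β at time t, applied to all pairs), if deg_{G^{(t)}}(u) ≥ deg_{G^{(t)}}(w) for some t ≥ 1, then deg_{G^{(t+1)}}(u) ≥ deg_{G^{(t+1)}}(w). -/
/-- Degree of a vertex, as the natural cardinality of its neighbor set. -/
noncomputable def deg {V : Type*} (G : SimpleGraph V) (v : V) : ℕ :=
  (G.neighborSet v).ncard

/-- One step of the degree-energy process with a single threshold `β`: the edge
`(u,v)` is present at the next step iff `u ≠ v` and `f (deg u) (deg v) ≥ β`. -/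
noncomputable def degStep {V : Type*} (f : ℕ → ℕ → ℝ) (β : ℝ) (G : SimpleGraph V) :
    SimpleGraph V :=
  SimpleGraph.fromRel (fun u v => β ≤ f (deg G u) (deg G v))

lemma degStep_mono {V : Type*} [Fintype V] (f : ℕ → ℕ → ℝ) (β : ℝ)
    (hsymm : ∀ x y, f x y = f y x)
    (hmono : ∀ x x' y y', x ≤ x' → y ≤ y' → f x y ≤ f x' y')
    (G : SimpleGraph V) (u w : V)
    (hdeg : deg G w ≤ deg G u) :
    deg (degStep f β G) w ≤ deg (degStep f β G) u := by
  classical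
  have hadj : ∀ a b : V, (degStep f β G).Adj a b ↔ a ≠ b ∧ β ≤ f (deg G a) (deg G b) := by
    intro a b
    simp only [degStep, SimpleGraph.fromRel_adj]
    rw [hsymm (deg G b)]
    tauto
  apply Set.ncard_le_ncard_of_injOn (fun v => if v = u then w else v)
  · intro v hv
    simp only [SimpleGraph.mem_neighborSet, hadj] at hv ⊢
    obtain ⟨hvw, hβ⟩ := hv
    by_cases hvu : v = u
    · subst hvu
      simp only [if_pos rfl]
      exact ⟨fun h => hvw h.symm, by rw [hsymm]; exact hβ⟩
    · simp only [if_neg hvu]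
      exact ⟨fun h => hvu h.symm, le_trans hβ (hmono _ _ _ _ hdeg le_rfl)⟩
  · intro a ha b hb hab
    simp only [SimpleGraph.mem_neighborSet, hadj] at ha hb
    by_cases hau : a = u <;> by_cases hbu : b = u <;>
      simp only [hau, hbu, if_pos, if_neg, if_true, if_false] at hab
    · rw [hau, hbu]
    · exact absurd hab hb.1
    · exact absurd hab.symm ha.1
    · exact hab

theorem stmt_13 {V : Type*} [Fintype V] (f : ℕ → ℕ → ℝ) (β : ℝ)
    (hsymm : ∀ x y, f x y = f y x)
    (hmono : ∀ x x' y y', x ≤ x' → y ≤ y' → f x y ≤ f x' y')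
    (G₀ : SimpleGraph V) (t : ℕ) (ht : 1 ≤ t) (u w : V)
    (hdeg : deg ((degStep f β)^[t] G₀) w ≤ deg ((degStep f β)^[t] G₀) u) :
    deg ((degStep f β)^[t + 1] G₀) w ≤ deg ((degStep f β)^[t + 1] G₀) u := by
  rw [Function.iterate_succ_apply']
  exact degStep_mono f β hsymm hmono _ u w hdeg
end

section
/- In the degree-energy process with a single threshold β, the number of distinct degree values (equivalence classes under equal degree) is non-increasing from G^{(t)} to G^{(t+1)} for t ≥ 1. -/
/-!
Vertices of equal degree are interchangeable in a step of the process: adjacency in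
`degStep f β G` depends only on the degrees in `G` of the two (distinct) endpoints, so the
transposition of two vertices of equal degree is an automorphism of `degStep f β G`. Hence the
new degree is a function of the old one, and the set of new degrees is the image of the set of
old degrees under that function.
-/

theorem deg_iso_apply {V W : Type*} {G : SimpleGraph V} {H : SimpleGraph W} (e : G ≃g H) (v : V) :
    deg H (e v) = deg G v := by
  rw [deg, deg, ← e.toEmbedding.preimage_neighborSet v]
  exact (Set.ncard_preimage_of_injective_subset_range e.injective
    (by simp [e.surjective.range_eq])).symm

section DegStep

variable {V : Type*} (f : ℕ → ℕ → ℝ) (β : ℝ) (G : SimpleGraph V)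

theorem deg_degStep_perm_apply (σ : Equiv.Perm V) (hσ : ∀ v, deg G (σ v) = deg G v) (v : V) :
    deg (degStep f β G) (σ v) = deg (degStep f β G) v :=
  deg_iso_apply ⟨σ, by simp [degStep, hσ, σ.injective.ne_iff]⟩ v

theorem deg_degStep_eq_of_deg_eq {v w : V} (h : deg G v = deg G w) :
    deg (degStep f β G) v = deg (degStep f β G) w := by
  classical
  have hswap : ∀ u, deg G (Equiv.swap v w u) = deg G u := by
    intro u
    rw [Equiv.swap_apply_def]
    split_ifs with hv hw
    exacts [hv ▸ h.symm, hw ▸ h, rfl]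
  simpa using (deg_degStep_perm_apply f β G (Equiv.swap v w) hswap v).symm

theorem card_image_deg_degStep_le [Fintype V] :
    (Finset.univ.image (deg (degStep f β G))).card ≤ (Finset.univ.image (deg G)).card := by
  obtain ⟨g, hg⟩ := (Function.factorsThrough_iff (f := deg G) (deg (degStep f β G))).mp
    fun _ _ => deg_degStep_eq_of_deg_eq f β G
  rw [hg, ← Finset.image_image]
  exact Finset.card_image_le

end DegStep

theorem stmt_15_general {V : Type*} [Fintype V] (f : ℕ → ℕ → ℝ) (β : ℝ)
    (G₀ : SimpleGraph V) (t : ℕ) :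
    (Finset.image (deg ((degStep f β)^[t + 1] G₀)) Finset.univ).card ≤
      (Finset.image (deg ((degStep f β)^[t] G₀)) Finset.univ).card := by
  rw [Function.iterate_succ_apply']
  exact card_image_deg_degStep_le f β _

theorem stmt_15 {V : Type*} [Fintype V] (f : ℕ → ℕ → ℝ) (β : ℝ)
    (hsymm : ∀ x y, f x y = f y x)
    (hmono : ∀ x x' y y', x ≤ x' → y ≤ y' → f x y ≤ f x' y')
    (G₀ : SimpleGraph V) (t : ℕ) (ht : 1 ≤ t) :
    (Finset.image (deg ((degStep f β)^[t + 1] G₀)) Finset.univ).card ≤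
      (Finset.image (deg ((degStep f β)^[t] G₀)) Finset.univ).card :=
  stmt_15_general f β G₀ t
end

section
/- (Convergence for degree-like energies) Consider the process on simple graphs over a finite vertex set V with thresholds α ≤ β: edge (u,v) at time t+1 is present if f(g_{G^{(t)}}(u), g_{G^{(t)}}(v)) ≥ β, absent if < α, and unchanged if in [α, β); updates are applied only on pairs in an arbitrary time-dependent interaction relation C^{(t)}, other pairs unchanged. If f is symmetric and non-decreasing in each argument, and g is degree-like (N_{G}(u) ⊇ N_{G'}(v) implies g_G(u) ≥ g_{G'}(v)), then the process converges: there exists t such that G^{(t')} = G^{(t)} for all t' ≥ t. -/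
namespace Stmt17Aux

variable {V : Type*}

/-- The status of the pair `(u,v)` changes at step `t`. -/
def FlipAt (Gs : ℕ → SimpleGraph V) (u v : V) (t : ℕ) : Prop :=
  ¬ ((Gs t).Adj u v ↔ (Gs (t+1)).Adj u v)

/-- The pair `(u,v)` turns on at step `t`. -/
def IsBirth (Gs : ℕ → SimpleGraph V) (u v : V) (t : ℕ) : Prop :=
  ¬ (Gs t).Adj u v ∧ (Gs (t+1)).Adj u v

/-- The pair `(u,v)` turns off at step `t`. -/
def IsDeath (Gs : ℕ → SimpleGraph V) (u v : V) (t : ℕ) : Prop :=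
  (Gs t).Adj u v ∧ ¬ (Gs (t+1)).Adj u v

lemma flip_iff {Gs : ℕ → SimpleGraph V} {u v : V} {t : ℕ} :
    FlipAt Gs u v t ↔ IsBirth Gs u v t ∨ IsDeath Gs u v t := by
  unfold FlipAt IsBirth IsDeath; tauto

lemma birth_symm {Gs : ℕ → SimpleGraph V} {u v : V} {t : ℕ}
    (h : IsBirth Gs u v t) : IsBirth Gs v u t :=
  ⟨fun h' => h.1 h'.symm, h.2.symm⟩

lemma death_symm {Gs : ℕ → SimpleGraph V} {u v : V} {t : ℕ}
    (h : IsDeath Gs u v t) : IsDeath Gs v u t :=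
  ⟨h.1.symm, fun h' => h.2 h'.symm⟩

lemma const_of_no_flip (Gs : ℕ → SimpleGraph V) (u v : V) {N t : ℕ} (hNt : N ≤ t)
    (h : ∀ τ, N ≤ τ → τ < t → ¬ FlipAt Gs u v τ) :
    ((Gs N).Adj u v ↔ (Gs t).Adj u v) := by
  induction t, hNt using Nat.le_induction with
  | base => exact Iff.rfl
  | succ t ht ih =>
      have h1 : ((Gs t).Adj u v ↔ (Gs (t+1)).Adj u v) :=
        not_not.mp (h t ht (Nat.lt_succ_self t))
      exact (ih (fun τ hτ1 hτ2 => h τ hτ1 (hτ2.trans (Nat.lt_succ_self t)))).trans h1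

lemma exists_first {P : ℕ → Prop} (h : ∃ t, P t) :
    ∃ t, P t ∧ ∀ τ, τ < t → ¬ P τ := by
  classical
  exact ⟨Nat.find h, Nat.find_spec h, fun τ hτ => Nat.find_min h hτ⟩

/-- From an off status and infinitely many flips, find a birth. -/
lemma birth_from_off {Gs : ℕ → SimpleGraph V} {u v : V}
    (hio : ∀ N, ∃ t, N ≤ t ∧ FlipAt Gs u v t) {M : ℕ}
    (hoff : ¬ (Gs M).Adj u v) : ∃ t, M ≤ t ∧ IsBirth Gs u v t := by
  obtain ⟨t, ⟨hMt, hflip⟩, hmin⟩ := exists_first (hio M)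
  have hconst := const_of_no_flip Gs u v hMt
    (fun τ h1 h2 => fun hf => hmin τ h2 ⟨h1, hf⟩)
  have hofft : ¬ (Gs t).Adj u v := fun h => hoff (hconst.mpr h)
  rcases flip_iff.mp hflip with hb | hd
  · exact ⟨t, hMt, hb⟩
  · exact absurd hd.1 hofft

/-- From an on status and infinitely many flips, find a death. -/
lemma death_from_on {Gs : ℕ → SimpleGraph V} {u v : V}
    (hio : ∀ N, ∃ t, N ≤ t ∧ FlipAt Gs u v t) {M : ℕ}
    (hon : (Gs M).Adj u v) : ∃ t, M ≤ t ∧ IsDeath Gs u v t := by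
  obtain ⟨t, ⟨hMt, hflip⟩, hmin⟩ := exists_first (hio M)
  have hconst := const_of_no_flip Gs u v hMt
    (fun τ h1 h2 => fun hf => hmin τ h2 ⟨h1, hf⟩)
  have hont : (Gs t).Adj u v := hconst.mp hon
  rcases flip_iff.mp hflip with hb | hd
  · exact absurd hont hb.1
  · exact ⟨t, hMt, hd⟩

lemma io_death {Gs : ℕ → SimpleGraph V} {u v : V}
    (hio : ∀ N, ∃ t, N ≤ t ∧ FlipAt Gs u v t) (N : ℕ) :
    ∃ t, N ≤ t ∧ IsDeath Gs u v t := by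
  by_cases h : (Gs N).Adj u v
  · exact death_from_on hio h
  · obtain ⟨t, hNt, hb⟩ := birth_from_off hio h
    obtain ⟨s, hts, hd⟩ := death_from_on hio (M := t+1) hb.2
    exact ⟨s, le_trans (le_trans hNt (Nat.le_succ t)) hts, hd⟩

lemma io_birth {Gs : ℕ → SimpleGraph V} {u v : V}
    (hio : ∀ N, ∃ t, N ≤ t ∧ FlipAt Gs u v t) (N : ℕ) :
    ∃ t, N ≤ t ∧ IsBirth Gs u v t := by
  by_cases h : (Gs N).Adj u v
  · obtain ⟨t, hNt, hd⟩ := death_from_on hio h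
    obtain ⟨s, hts, hb⟩ := birth_from_off hio (M := t+1) hd.2
    exact ⟨s, le_trans (le_trans hNt (Nat.le_succ t)) hts, hb⟩
  · exact birth_from_off hio h

end Stmt17Aux

open Stmt17Aux in
/-- Convergence for degree-like energies: the two-threshold process where the
edge `(u,v)` is updated only when `(u,v)` is in the (time-dependent, symmetric)
interaction relation `C t`, in which case it is present at time `t+1` iff
`f (g Gₜ u) (g Gₜ v) ≥ β`, or it was present and `f (g Gₜ u) (g Gₜ v) ≥ α`;
pairs not in `C t` keep their edge status.  If `f` is symmetric and
non-decreasing in each argument and `g` is degree-like (monotone under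
neighborhood inclusion across graphs), then the process converges. -/
theorem stmt_17 {V : Type*} [Fintype V]
    (f : ℝ → ℝ → ℝ)
    (hfsymm : ∀ x y, f x y = f y x)
    (hfmono : ∀ x x' y y', x ≤ x' → y ≤ y' → f x y ≤ f x' y')
    (g : SimpleGraph V → V → ℝ)
    (hg : ∀ (G G' : SimpleGraph V) (u v : V),
      G'.neighborSet v ⊆ G.neighborSet u → g G' v ≤ g G u)
    (α β : ℝ) (hαβ : α ≤ β)
    (C : ℕ → V → V → Prop) (hCsymm : ∀ t u v, C t u v → C t v u)
    (Gs : ℕ → SimpleGraph V)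
    (hstep : ∀ t u v, (Gs (t + 1)).Adj u v ↔
      (C t u v ∧ u ≠ v ∧
        (β ≤ f (g (Gs t) u) (g (Gs t) v) ∨
         ((Gs t).Adj u v ∧ α ≤ f (g (Gs t) u) (g (Gs t) v)))) ∨
      (¬ C t u v ∧ (Gs t).Adj u v)) :
    ∃ t : ℕ, ∀ t' : ℕ, t ≤ t' → Gs t' = Gs t := by
  classical
  by_contra hcon
  push_neg at hcon
  -- flips occur beyond every time
  have hflipex : ∀ N, ∃ s, N ≤ s ∧ ∃ u v, FlipAt Gs u v s := by
    intro N
    by_contra hno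
    push_neg at hno
    obtain ⟨t', hNt', hne⟩ := hcon N
    refine hne (SimpleGraph.ext ?_)
    funext u v
    exact propext (const_of_no_flip Gs u v hNt'
      (fun τ h1 h2 => hno τ h1 u v)).symm
  -- each pair either quiets down, or flips infinitely often
  have hclass : ∀ p : V × V, ∃ N,
      (∀ t, N ≤ t → ¬ FlipAt Gs p.1 p.2 t) ∨
      (∀ M, ∃ t, M ≤ t ∧ FlipAt Gs p.1 p.2 t) := by
    intro p
    by_cases h : ∀ M, ∃ t, M ≤ t ∧ FlipAt Gs p.1 p.2 t
    · exact ⟨0, Or.inr h⟩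
    · push_neg at h
      obtain ⟨N, hN⟩ := h
      exact ⟨N, Or.inl (fun t ht hf => hN t ht hf)⟩
  choose Bf hBf using hclass
  set T : ℕ := (Finset.univ : Finset (V × V)).sup Bf with hTdef
  have hT : ∀ u v t, T ≤ t → FlipAt Gs u v t →
      ∀ N, ∃ s, N ≤ s ∧ FlipAt Gs u v s := by
    intro u v t ht hf N
    rcases hBf (u, v) with hq | hio
    · exact absurd hf (hq t (le_trans (Finset.le_sup (Finset.mem_univ (u, v))) ht))
    · exact hio N
  -- basic event consequences of the update rule
  have death_lt : ∀ u v s, IsDeath Gs u v s →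
      f (g (Gs s) u) (g (Gs s) v) < α := by
    intro u v s hd
    obtain ⟨hadj, hnadj⟩ := hd
    by_contra hge
    push_neg at hge
    apply hnadj
    apply (hstep s u v).mpr
    by_cases hc : C s u v
    · exact Or.inl ⟨hc, hadj.ne, Or.inr ⟨hadj, hge⟩⟩
    · exact Or.inr ⟨hc, hadj⟩
  have birth_ge : ∀ u v s, IsBirth Gs u v s →
      β ≤ f (g (Gs s) u) (g (Gs s) v) := by
    intro u v s hb
    obtain ⟨hnadj, hadj⟩ := hb
    rcases (hstep s u v).mp hadj with ⟨_, _, h3⟩ | ⟨_, h⟩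
    · rcases h3 with h | ⟨h, _⟩
      · exact h
      · exact absurd h hnadj
    · exact absurd h hnadj
  -- a flip at some time ≥ T
  obtain ⟨s₁, hTs₁, u₁, v₁, hf₁⟩ := hflipex T
  have hio₁ : ∀ N, ∃ s, N ≤ s ∧ FlipAt Gs u₁ v₁ s := hT u₁ v₁ s₁ hTs₁ hf₁
  -- value sets
  haveI hfinG : Finite (SimpleGraph V) :=
    Finite.of_injective (fun G : SimpleGraph V => G.Adj)
      (fun a b h => SimpleGraph.ext h)
  set DV : Set ℝ :=
    {r | ∃ x w s, T ≤ s ∧ IsDeath Gs x w s ∧ r = g (Gs s) x} with hDVdef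
  set BV : Set ℝ :=
    {r | ∃ x w s, T ≤ s ∧ IsBirth Gs x w s ∧ r = g (Gs s) x} with hBVdef
  have hDVfin : DV.Finite := by
    refine (Set.finite_range (fun p : SimpleGraph V × V => g p.1 p.2)).subset ?_
    rintro r ⟨x, w, s, _, _, rfl⟩
    exact ⟨(Gs s, x), rfl⟩
  have hBVfin : BV.Finite := by
    refine (Set.finite_range (fun p : SimpleGraph V × V => g p.1 p.2)).subset ?_
    rintro r ⟨x, w, s, _, _, rfl⟩
    exact ⟨(Gs s, x), rfl⟩
  obtain ⟨sD, hTsD, hdD⟩ := io_death hio₁ T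
  obtain ⟨sB, hTsB, hbB⟩ := io_birth hio₁ T
  have hDVne : DV.Nonempty := ⟨g (Gs sD) u₁, u₁, v₁, sD, hTsD, hdD, rfl⟩
  have hBVne : BV.Nonempty := ⟨g (Gs sB) u₁, u₁, v₁, sB, hTsB, hbB, rfl⟩
  set DF : Finset ℝ := hDVfin.toFinset with hDFdef
  set BF : Finset ℝ := hBVfin.toFinset with hBFdef
  have hDFne : DF.Nonempty := by
    rw [hDFdef, Set.Finite.toFinset_nonempty]; exact hDVne
  have hBFne : BF.Nonempty := by
    rw [hBFdef, Set.Finite.toFinset_nonempty]; exact hBVne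
  set MD : ℝ := DF.max' hDFne with hMDdef
  set mB : ℝ := BF.min' hBFne with hmBdef
  have hMDmem : MD ∈ DV := (Set.Finite.mem_toFinset _).mp (DF.max'_mem hDFne)
  have hmBmem : mB ∈ BV := (Set.Finite.mem_toFinset _).mp (BF.min'_mem hBFne)
  have hMDub : ∀ r ∈ DV, r ≤ MD := fun r hr =>
    DF.le_max' r ((Set.Finite.mem_toFinset _).mpr hr)
  have hmBlb : ∀ r ∈ BV, mB ≤ r := fun r hr =>
    BF.min'_le r ((Set.Finite.mem_toFinset _).mpr hr)
  -- Lemma UP: every birth coordinate is ≤ MD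
  have up : ∀ p q t, T ≤ t → IsBirth Gs p q t → g (Gs t) p ≤ MD := by
    intro p q t hTt hb
    have hio : ∀ N, ∃ s, N ≤ s ∧ FlipAt Gs p q s :=
      hT p q t hTt (flip_iff.mpr (Or.inl hb))
    have hdx : ∃ s, t ≤ s ∧ ∃ w, IsDeath Gs p w s := by
      obtain ⟨s, hs, hd⟩ := io_death hio t
      exact ⟨s, hs, q, hd⟩
    obtain ⟨r, ⟨htr, w, hdw⟩, hmin⟩ := exists_first hdx
    obtain ⟨k, rfl⟩ := Nat.exists_eq_add_of_le htr
    have mono : ∀ j, j ≤ k → ∀ z, (Gs t).Adj p z → (Gs (t + j)).Adj p z := by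
      intro j
      induction j with
      | zero => exact fun _ z h => h
      | succ j ih =>
          intro hle z hz
          have h2 := ih (by omega) z hz
          by_contra hnot
          exact hmin (t + j) (by omega) ⟨by omega, z, h2, hnot⟩
    have hsub : (Gs t).neighborSet p ⊆ (Gs (t + k)).neighborSet p := by
      intro z hz
      rw [SimpleGraph.mem_neighborSet] at hz ⊢
      exact mono k le_rfl z hz
    have hgle : g (Gs t) p ≤ g (Gs (t + k)) p := hg (Gs (t + k)) (Gs t) p p hsub
    have hmem : g (Gs (t + k)) p ∈ DV :=
      ⟨p, w, t + k, le_trans hTt (by omega), hdw, rfl⟩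
    exact le_trans hgle (hMDub _ hmem)
  -- Lemma DOWN: every death coordinate is ≥ mB
  have down : ∀ x w s, T ≤ s → IsDeath Gs x w s → mB ≤ g (Gs s) x := by
    intro x w s hTs hd
    have hio : ∀ N, ∃ r, N ≤ r ∧ FlipAt Gs x w r :=
      hT x w s hTs (flip_iff.mpr (Or.inr hd))
    have hbx : ∃ r, s ≤ r ∧ ∃ w', IsBirth Gs x w' r := by
      obtain ⟨r, hr, hb⟩ := io_birth hio s
      exact ⟨r, hr, w, hb⟩
    obtain ⟨r, ⟨hsr, w', hbw⟩, hmin⟩ := exists_first hbx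
    obtain ⟨k, rfl⟩ := Nat.exists_eq_add_of_le hsr
    have mono : ∀ j, j ≤ k → ∀ z, (Gs (s + j)).Adj x z → (Gs s).Adj x z := by
      intro j
      induction j with
      | zero => exact fun _ z h => h
      | succ j ih =>
          intro hle z hz
          have h2 : (Gs (s + j)).Adj x z := by
            by_contra hnot
            exact hmin (s + j) (by omega) ⟨by omega, z, hnot, hz⟩
          exact ih (by omega) z h2
    have hsub : (Gs (s + k)).neighborSet x ⊆ (Gs s).neighborSet x := by
      intro z hz
      rw [SimpleGraph.mem_neighborSet] at hz ⊢
      exact mono k le_rfl z hz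
    have hgle : g (Gs (s + k)) x ≤ g (Gs s) x := hg (Gs s) (Gs (s + k)) x x hsub
    have hmem : g (Gs (s + k)) x ∈ BV :=
      ⟨x, w', s + k, le_trans hTs (by omega), hbw, rfl⟩
    exact le_trans (hmBlb _ hmem) hgle
  -- extract witnesses and derive the contradiction
  obtain ⟨x₀, w₀, s₀, hTs₀, hd₀, hvalD⟩ := hMDmem
  obtain ⟨xm, wm, tm, hTtm, hbm, hvalB⟩ := hmBmem
  have h1 : f (g (Gs s₀) x₀) (g (Gs s₀) w₀) < α := death_lt _ _ _ hd₀
  have h2 : β ≤ f (g (Gs tm) xm) (g (Gs tm) wm) := birth_ge _ _ _ hbm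
  have hY : g (Gs tm) wm ≤ g (Gs s₀) x₀ := by
    have := up wm xm tm hTtm (birth_symm hbm)
    rw [← hvalD]; exact this
  have hX : g (Gs tm) xm ≤ g (Gs s₀) w₀ := by
    have := down w₀ x₀ s₀ hTs₀ (death_symm hd₀)
    rw [hvalB] at this; exact this
  have hchain : f (g (Gs tm) xm) (g (Gs tm) wm) ≤ f (g (Gs s₀) w₀) (g (Gs s₀) x₀) :=
    hfmono _ _ _ _ hX hY
  rw [hfsymm (g (Gs s₀) w₀) (g (Gs s₀) x₀)] at hchain
  linarith
end
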